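/- Let (T, f) be a depth-decomposition of a vector matroid M = (X, I) such that T is not a rooted path and each primary branch of T is at capacity. Let S_1, ..., S_k be the primary branches of T, let A_1, ..., A_k be the linear hulls of Ŝ_1, ..., Ŝ_k respectively, and let h be the depth of the common root of S_1, ..., S_k in T. Then there exists a subspace K of dimension h such that A_i ∩ A_j = K for all 1 ≤ i < j ≤ k. -/

import Mathlib

/-! Infrastructure: rooted trees, depth-decompositions and branch-depth of matroids,
following the definitions of Kardoš, Král', Liebenau, Mach and of the paper
"Optimal matrix tree-depth and a row-invariant parameterized algorithm for
integer programming". -/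

/-- A rooted tree on a (nonempty) finite vertex type `V`, given by its root and its
parent function: the parent of the root is the root itself, and from any vertex the
root is reached by iterating the parent function. -/
structure RTree (V : Type) [Fintype V] [DecidableEq V] where
  root : V
  parent : V → V
  parent_root : parent root = root
  reach : ∀ v : V, ∃ n : ℕ, parent^[n] v = root

namespace RTree

variable {V : Type} [Fintype V] [DecidableEq V]

/-- A vertex is a leaf if it has no children. -/
def IsLeaf (T : RTree V) (v : V) : Prop :=
  ∀ u : V, T.parent u = v → u = v

/-- The non-root vertices on the path from `v` to the root of `T`; they are in bijective
correspondence with the edges of this path (each such vertex corresponds to the edge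
joining it to its parent). -/
def pathEdges (T : RTree V) (v : V) : Set V :=
  {u | u ≠ T.root ∧ ∃ n : ℕ, T.parent^[n] v = u}

/-- The number of edges of the tree. -/
def edgeCount (T : RTree V) : ℕ := Fintype.card V - 1

/-- The depth of a vertex: the number of edges on the path from the root to it. -/
noncomputable def depthV (T : RTree V) (v : V) : ℕ :=
  sInf {n : ℕ | T.parent^[n] v = T.root}

/-- The depth of the tree: the maximum number of edges on a path from the root to a leaf. -/
noncomputable def depth (T : RTree V) : ℕ :=
  Finset.univ.sup T.depthV

/-- The descendants of a vertex `u` (including `u` itself). -/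
def desc (T : RTree V) (u : V) : Set V := {w | ∃ n : ℕ, T.parent^[n] w = u}

/-- The number of children of a vertex. -/
noncomputable def childCount (T : RTree V) (u : V) : ℕ :=
  {w : V | T.parent w = u ∧ w ≠ u}.ncard

/-- A rooted tree is a rooted path if every vertex has at most one child. -/
def IsRootedPath (T : RTree V) : Prop := ∀ u : V, T.childCount u ≤ 1

/-- `a` is a strict ancestor of `v`. -/
def IsStrictAncestor (T : RTree V) (a v : V) : Prop :=
  a ≠ v ∧ ∃ n : ℕ, T.parent^[n] v = a

/-- A branch of `T` consists of a vertex `u`, exactly one child `u'` of `u` and all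
descendants of `u'`; it is hence determined by the non-root vertex `u'` and denoted
here by `u'`.  Its root is `parent u'`, its vertex set is `{parent u'} ∪ desc u'`, and
its edge number `‖S‖` is `(desc u').ncard`.  The branch determined by `u'` is primary
if its root has at least two children and every (strict) ancestor of its root has
exactly one child. -/
def IsPrimaryBranch (T : RTree V) (u' : V) : Prop :=
  u' ≠ T.root ∧ 2 ≤ T.childCount (T.parent u') ∧
    ∀ a : V, T.IsStrictAncestor a (T.parent u') → T.childCount a = 1

end RTree

/-- `(T, f)` is a depth-decomposition of the matroid on ground set `X` with rank
function `rk` and rank `r`: `f` maps elements of the matroid to leaves of `T`, the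
number of edges of `T` equals the rank `r` of the matroid, and the rank of every
`X' ⊆ X` is at most the number of edges contained in the union of the paths in `T`
from the root to the vertices `f x`, `x ∈ X'`. -/
def IsDepthDecompOn {X V : Type} [Fintype V] [DecidableEq V]
    (rk : Set X → ℕ) (r : ℕ) (T : RTree V) (f : X → V) : Prop :=
  (∀ x : X, T.IsLeaf (f x)) ∧ T.edgeCount = r ∧
    ∀ X' : Set X, rk X' ≤ (⋃ x ∈ X', T.pathEdges (f x)).ncard

/-- The branch-depth of the matroid on ground set `X` with rank function `rk` and
rank `r`: the smallest depth of a rooted tree forming a depth-decomposition. -/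
noncomputable def branchDepth {X : Type} (rk : Set X → ℕ) (r : ℕ) : ℕ :=
  sInf {d : ℕ | ∃ (nV : ℕ) (T : RTree (Fin (nV + 1))) (f : X → Fin (nV + 1)),
    IsDepthDecompOn rk r T f ∧ T.depth = d}

/-- The branch of `T` determined by the non-root vertex `u'` is at capacity: the rank
of the set `Ŝ` of matroid elements mapped by `f` to the leaves of the branch equals the
number `‖S‖` of edges of the branch plus the number of edges on the path from the root
of `T` to the root of the branch. -/
def AtCapacity {X V : Type} [Fintype V] [DecidableEq V]
    (rk : Set X → ℕ) (T : RTree V) (f : X → V) (u' : V) : Prop :=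
  rk {x | f x ∈ T.desc u'} = (T.desc u').ncard + T.depthV (T.parent u')

/-- The rank function of the vector matroid formed by the family of vectors `v`:
the rank of a subset is the dimension of its linear hull. -/
noncomputable def vecRk (F : Type) {W ι : Type} [Field F] [AddCommGroup W] [Module F W]
    (v : ι → W) (S : Set ι) : ℕ :=
  Module.finrank F (Submodule.span F (v '' S))

/-- `(T, f, g)` is an extended depth-decomposition of the vector matroid formed by the
family of vectors `v`: `(T, f)` is a depth-decomposition, the images under `g` of the
non-root vertices of `T` form a basis of the linear hull of the vectors, and every
vector `v x` lies in the linear hull of the `g`-image of the non-root vertices on the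
path from `f x` to the root. -/
def IsExtDepthDecomp (F : Type) {W ι V : Type} [Field F] [AddCommGroup W] [Module F W]
    [Fintype V] [DecidableEq V] (v : ι → W) (T : RTree V) (f : ι → V) (g : V → W) : Prop :=
  IsDepthDecompOn (vecRk F v) (vecRk F v Set.univ) T f ∧
  LinearIndependent F (fun u : {u : V // u ≠ T.root} => g u.val) ∧
  Submodule.span F (g '' {u : V | u ≠ T.root}) = Submodule.span F (Set.range v) ∧
  ∀ x : ι, v x ∈ Submodule.span F (g '' T.pathEdges (f x))

/-! Let `b` be the shallowest vertex with at least two children: every strict ancestor of `b`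
has exactly one child, and the primary branches are the branches at the children `u` of `b`.
Write `A u` for the hull of such a branch and `n u` for its number of edges. The
depth-decomposition gives `dim (⨆ u ∈ t, A u) ≤ h + ∑ u ∈ t, n u` for every set `t` of
children, with equality for all children since their branches contain every leaf, while
capacity gives `dim (A u) = h + n u`. The dimension formula then yields
`dim (A u ⊓ ⨆ w ≠ u, A w) ≤ h ≤ dim (A u ⊓ A w)` for `w ≠ u`, so `A u ⊓ A w` is the
`h`-dimensional space `A u ⊓ ⨆ w ≠ u, A w`, independent of `w`, and by symmetry of `u` too. -/

open Module

namespace Submodule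

theorem finset_sup_span_image {K E ι κ : Type*} [Field K] [AddCommGroup E] [Module K E]
    (v : ι → E) (S : κ → Set ι) (t : Finset κ) :
    t.sup (fun k => span K (v '' S k)) = span K (v '' ⋃ k ∈ t, S k) := by
  simp only [Finset.sup_eq_iSup, Set.image_iUnion₂, span_iUnion₂]

variable {K E ι : Type*} [Field K] [AddCommGroup E] [Module K E] [DecidableEq ι]
  {A : ι → Submodule K E} [∀ i, FiniteDimensional K (A i)] {s : Finset ι} {n : ι → ℕ}
  {h : ℕ}

theorem inf_eq_erase_sup_inf_of_finrank (hA : ∀ i ∈ s, finrank K (A i) = h + n i)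
    (hle : ∀ t ⊆ s, finrank K ↥(t.sup A) ≤ h + ∑ i ∈ t, n i)
    (hs : h + ∑ i ∈ s, n i ≤ finrank K ↥(s.sup A)) {i j : ι} (hi : i ∈ s) (hj : j ∈ s)
    (hij : i ≠ j) :
    A j ⊓ A i = (s.erase i).sup A ⊓ A i ∧
      finrank K ↥((s.erase i).sup A ⊓ A i) = h := by
  have hsup : (s.erase i).sup A ⊔ A i = s.sup A := by
    rw [sup_comm, ← Finset.sup_insert, Finset.insert_erase hi]
  have hinf_le : finrank K ↥((s.erase i).sup A ⊓ A i) ≤ h := by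
    have := finrank_sup_add_finrank_inf_eq ((s.erase i).sup A) (A i)
    have := hle _ (s.erase_subset i)
    have := Finset.sum_erase_add s n hi
    have := hA i hi
    rw [hsup] at *
    omega
  have hpair : h ≤ finrank K ↥(A j ⊓ A i) := by
    have := finrank_sup_add_finrank_inf_eq (A j) (A i)
    have := hle {j, i} (Finset.insert_subset hj (Finset.singleton_subset_iff.2 hi))
    rw [Finset.sup_insert, Finset.sup_singleton, Finset.sum_pair hij.symm] at this
    have := hA i hi
    have := hA j hj
    omega
  have hle' : A j ⊓ A i ≤ (s.erase i).sup A ⊓ A i :=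
    inf_le_inf_right _ (Finset.le_sup (Finset.mem_erase.2 ⟨hij.symm, hj⟩))
  exact ⟨eq_of_le_of_finrank_le hle' (hinf_le.trans hpair),
    le_antisymm hinf_le (hpair.trans (finrank_mono hle'))⟩

theorem exists_pairwise_inf_eq_of_finrank (hA : ∀ i ∈ s, finrank K (A i) = h + n i)
    (hle : ∀ t ⊆ s, finrank K ↥(t.sup A) ≤ h + ∑ i ∈ t, n i)
    (hs : h + ∑ i ∈ s, n i ≤ finrank K ↥(s.sup A)) (hs2 : s.Nontrivial) :
    ∃ L : Submodule K E, finrank K L = h ∧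
      ∀ i ∈ s, ∀ j ∈ s, i ≠ j → A i ⊓ A j = L := by
  have key := fun {i j} => inf_eq_erase_sup_inf_of_finrank hA hle hs (i := i) (j := j)
  obtain ⟨i₀, hi₀, j₀, hj₀, hij₀⟩ := hs2
  refine ⟨(s.erase i₀).sup A ⊓ A i₀, (key hi₀ hj₀ hij₀).2, fun i hi j hj hij => ?_⟩
  rw [(key hj hi hij.symm).1]
  rcases eq_or_ne j i₀ with rfl | hj₀
  · rfl
  · rw [← (key hj hi₀ hj₀).1, inf_comm, (key hi₀ hj hj₀.symm).1]

end Submodule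

namespace RTree

variable {V : Type} [Fintype V] [DecidableEq V] {T : RTree V}

variable (T) in
def children (b : V) : Finset V := {w | T.parent w = b ∧ w ≠ b}

theorem mem_children {b w : V} : w ∈ T.children b ↔ T.parent w = b ∧ w ≠ b := by
  simp [children]

variable (T) in
theorem childCount_eq_card_children (b : V) : T.childCount b = (T.children b).card := by
  rw [childCount, ← Set.ncard_coe_finset]
  congr 1
  ext w
  simp [mem_children]

theorem nontrivial_children {b : V} (h2 : 2 ≤ T.childCount b) : (T.children b).Nontrivial := by
  rw [← Finset.one_lt_card_iff_nontrivial, ← childCount_eq_card_children]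
  omega

theorem eq_of_mem_children_of_childCount_eq_one {a c c' : V} (ha : T.childCount a = 1)
    (hc : c ∈ T.children a) (hc' : c' ∈ T.children a) : c = c' := by
  rw [childCount_eq_card_children] at ha
  exact Finset.card_le_one.1 ha.le c hc c' hc'

variable (T) in
theorem iterate_depthV (v : V) : T.parent^[T.depthV v] v = T.root :=
  Nat.sInf_mem (T.reach v)

theorem depthV_le {v : V} {n : ℕ} (h : T.parent^[n] v = T.root) : T.depthV v ≤ n :=
  Nat.sInf_le h

theorem depthV_eq_zero_iff {v : V} : T.depthV v = 0 ↔ v = T.root := by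
  refine ⟨fun h => by simpa [h] using T.iterate_depthV v, ?_⟩
  rintro rfl
  exact Nat.le_zero.1 (depthV_le rfl)

theorem iterate_root (n : ℕ) : T.parent^[n] T.root = T.root :=
  Function.iterate_fixed T.parent_root n

theorem iterate_eq_root_of_depthV_le {v : V} {n : ℕ} (h : T.depthV v ≤ n) :
    T.parent^[n] v = T.root := by
  rw [← Nat.sub_add_cancel h, Function.iterate_add_apply, iterate_depthV, iterate_root]

theorem parent_eq_self_iff {v : V} : T.parent v = v ↔ v = T.root :=
  ⟨fun h => by rw [← T.iterate_depthV v, Function.iterate_fixed h],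
    by rintro rfl; exact T.parent_root⟩

theorem ne_root_of_mem_children {b w : V} (hw : w ∈ T.children b) : w ≠ T.root := fun h =>
  (mem_children.1 hw).2 ((parent_eq_self_iff.2 h).symm.trans (mem_children.1 hw).1)

variable (T) in
theorem depthV_iterate_le (v : V) (n : ℕ) : T.depthV (T.parent^[n] v) ≤ T.depthV v :=
  depthV_le (by rw [← Function.iterate_add_apply, add_comm, Function.iterate_add_apply,
    iterate_depthV, iterate_root])

theorem depthV_parent_add_one {v : V} (hv : v ≠ T.root) :
    T.depthV (T.parent v) + 1 = T.depthV v := by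
  have hpos : T.depthV v ≠ 0 := fun h => hv (depthV_eq_zero_iff.1 h)
  have hle : T.depthV (T.parent v) ≤ T.depthV v - 1 := depthV_le <| by
    rw [← Function.iterate_succ_apply, Nat.succ_eq_add_one, Nat.sub_add_cancel (by omega),
      iterate_depthV]
  have hge : T.depthV v ≤ T.depthV (T.parent v) + 1 :=
    depthV_le (by rw [Function.iterate_succ_apply, iterate_depthV])
  omega

theorem depthV_of_mem_children {b w : V} (hw : w ∈ T.children b) :
    T.depthV w = T.depthV b + 1 := by
  rw [← depthV_parent_add_one (ne_root_of_mem_children hw), (mem_children.1 hw).1]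

theorem depthV_iterate {v : V} {n : ℕ} (h : n ≤ T.depthV v) :
    T.depthV (T.parent^[n] v) = T.depthV v - n := by
  induction n with
  | zero => rfl
  | succ m ih =>
    have hne : T.parent^[m] v ≠ T.root := fun hroot => by have := depthV_le hroot; omega
    have := depthV_parent_add_one hne
    rw [Function.iterate_succ_apply', ih (by omega)] at *
    omega

theorem mem_desc_iff {u w : V} (hu : u ≠ T.root) :
    w ∈ T.desc u ↔ T.depthV u ≤ T.depthV w ∧ T.parent^[T.depthV w - T.depthV u] w = u := by
  refine ⟨fun ⟨n, hn⟩ => ?_, fun h => ⟨_, h.2⟩⟩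
  have hn_lt : n < T.depthV w := by
    by_contra! hle
    exact hu (hn ▸ iterate_eq_root_of_depthV_le hle)
  have := depthV_iterate (v := w) hn_lt.le
  rw [hn] at this
  obtain rfl : n = T.depthV w - T.depthV u := by omega
  exact ⟨by omega, hn⟩

theorem le_depthV_of_mem_desc {u w : V} (hw : w ∈ T.desc u) : T.depthV u ≤ T.depthV w := by
  obtain ⟨n, rfl⟩ := hw
  exact T.depthV_iterate_le w n

theorem depthV_le_of_mem_pathEdges {u v : V} (hu : u ∈ T.pathEdges v) :
    T.depthV u ≤ T.depthV v := by
  obtain ⟨-, n, rfl⟩ := hu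
  exact T.depthV_iterate_le v n

theorem mem_desc_trans {u w z : V} (hz : z ∈ T.desc u) (hw : w ∈ T.desc z) :
    w ∈ T.desc u := by
  obtain ⟨m, rfl⟩ := hz
  obtain ⟨n, rfl⟩ := hw
  exact ⟨m + n, Function.iterate_add_apply _ _ _ _⟩

theorem disjoint_desc_of_depthV_eq {u₁ u₂ : V} (h₁ : u₁ ≠ T.root) (h₂ : u₂ ≠ T.root)
    (hd : T.depthV u₁ = T.depthV u₂) (hne : u₁ ≠ u₂) :
    Disjoint (T.desc u₁) (T.desc u₂) := by
  refine Set.disjoint_left.2 fun w hw₁ hw₂ => hne ?_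
  rw [mem_desc_iff h₁] at hw₁
  rw [mem_desc_iff h₂] at hw₂
  rw [← hw₁.2, ← hw₂.2, hd]

theorem pairwiseDisjoint_desc_children (b : V) :
    (T.children b : Set V).PairwiseDisjoint T.desc := fun _ hu₁ _ hu₂ hne =>
  disjoint_desc_of_depthV_eq (ne_root_of_mem_children hu₁) (ne_root_of_mem_children hu₂)
    (by rw [depthV_of_mem_children hu₁, depthV_of_mem_children hu₂]) hne

theorem disjoint_pathEdges_desc {u v : V} (h : T.depthV v < T.depthV u) :
    Disjoint (T.pathEdges v) (T.desc u) :=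
  Set.disjoint_left.2 fun _ hv hu =>
    absurd (depthV_le_of_mem_pathEdges hv) (by have := le_depthV_of_mem_desc hu; omega)

theorem ncard_pathEdges (v : V) : (T.pathEdges v).ncard = T.depthV v := by
  have hpath : T.pathEdges v = (fun i => T.parent^[i] v) '' Set.Iio (T.depthV v) := by
    ext u
    constructor
    · rintro ⟨hu, n, rfl⟩
      refine ⟨n, Set.mem_Iio.2 ?_, rfl⟩
      by_contra! hle
      exact hu (iterate_eq_root_of_depthV_le hle)
    · rintro ⟨i, hi, rfl⟩
      refine ⟨fun hroot => ?_, i, rfl⟩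
      have := depthV_iterate (v := v) (Set.mem_Iio.1 hi).le
      rw [show T.parent^[i] v = T.root from hroot, depthV_eq_zero_iff.2 rfl] at this
      exact absurd this (by simp only [Set.mem_Iio] at hi; omega)
  rw [hpath, Set.InjOn.ncard_image, ← Finset.coe_range, Set.ncard_coe_finset, Finset.card_range]
  intro i hi j hj hij
  have hi' := depthV_iterate (v := v) (Set.mem_Iio.1 hi).le
  have hj' := depthV_iterate (v := v) (Set.mem_Iio.1 hj).le
  simp only at hij
  rw [hij] at hi'
  simp only [Set.mem_Iio] at hi hj
  omega

theorem IsStrictAncestor.exists_mem_children {a b : V} (h : T.IsStrictAncestor a b) :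
    ∃ c ∈ T.children a, b ∈ T.desc c := by
  classical
  obtain ⟨hne, hex⟩ := h
  have hn : Nat.find hex ≠ 0 := fun h0 => hne (by simpa [h0] using (Nat.find_spec hex).symm)
  refine ⟨T.parent^[Nat.find hex - 1] b, mem_children.2 ⟨?_, ?_⟩, _, rfl⟩
  · rw [← Function.iterate_succ_apply' T.parent, Nat.succ_eq_add_one, Nat.sub_add_cancel
      (Nat.one_le_iff_ne_zero.2 hn), Nat.find_spec hex]
  · exact Nat.find_min hex (by omega)

theorem IsStrictAncestor.depthV_lt {a b : V} (h : T.IsStrictAncestor a b) :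
    T.depthV a < T.depthV b := by
  obtain ⟨c, hc, hbc⟩ := h.exists_mem_children
  have := le_depthV_of_mem_desc hbc
  rw [depthV_of_mem_children hc] at this
  omega

variable (T) in
def HasUnaryAncestors (b : V) : Prop :=
  ∀ a : V, T.IsStrictAncestor a b → T.childCount a = 1

namespace HasUnaryAncestors

variable {b : V} (hb : T.HasUnaryAncestors b)
include hb

theorem iterate_eq_of_depthV_le {w : V} (hw : T.depthV w ≤ T.depthV b) :
    T.parent^[T.depthV b - T.depthV w] b = w := by
  suffices ∀ d w, T.depthV w = d → d ≤ T.depthV b → T.parent^[T.depthV b - d] b = w from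
    this _ w rfl hw
  intro d
  induction d with
  | zero =>
    intro w hw _
    rw [depthV_eq_zero_iff.1 hw, Nat.sub_zero, iterate_depthV]
  | succ d ih =>
    intro w hw hd
    have hw_root : w ≠ T.root := fun h => by rw [h, depthV_eq_zero_iff.2 rfl] at hw; omega
    have hp : T.depthV (T.parent w) = d := by have := depthV_parent_add_one hw_root; omega
    set c := T.parent^[T.depthV b - (d + 1)] b
    have hc : T.depthV c = d + 1 := by rw [depthV_iterate (by omega)]; omega
    have hpc : T.parent c = T.parent w := by
      rw [← ih _ hp (by omega), ← Function.iterate_succ_apply' T.parent]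
      congr 1
      omega
    have hanc : T.IsStrictAncestor (T.parent w) b :=
      ⟨fun h => by rw [h] at hp; omega, _, ih _ hp (by omega)⟩
    exact eq_of_mem_children_of_childCount_eq_one (hb _ hanc)
      (mem_children.2 ⟨hpc, fun h => by rw [h] at hc; omega⟩)
      (mem_children.2 ⟨rfl, fun h => hw_root (parent_eq_self_iff.1 h.symm)⟩)

theorem iterate_eq_of_le_depthV {w : V} (hw : T.depthV b ≤ T.depthV w) :
    T.parent^[T.depthV w - T.depthV b] w = b := by
  have hd : T.depthV (T.parent^[T.depthV w - T.depthV b] w) = T.depthV b := by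
    rw [depthV_iterate (by omega)]
    omega
  simpa [hd] using (hb.iterate_eq_of_depthV_le hd.le).symm

theorem eq_of_two_le_childCount {b' : V} (hb' : T.HasUnaryAncestors b')
    (h2 : 2 ≤ T.childCount b) (h2' : 2 ≤ T.childCount b') : b = b' := by
  wlog hle : T.depthV b' ≤ T.depthV b generalizing b b'
  · exact (this hb' hb h2' h2 (by omega)).symm
  by_contra hne
  have := hb b' ⟨Ne.symm hne, _, hb.iterate_eq_of_depthV_le hle⟩
  omega

theorem exists_mem_children_mem_desc {w : V} (hw : T.depthV b < T.depthV w) :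
    ∃ u ∈ T.children b, w ∈ T.desc u := by
  set u := T.parent^[T.depthV w - (T.depthV b + 1)] w
  have hu : T.depthV u = T.depthV b + 1 := by rw [depthV_iterate (by omega)]; omega
  refine ⟨u, mem_children.2 ⟨?_, fun h => by rw [h] at hu; omega⟩, _, rfl⟩
  have hwb := hb.iterate_eq_of_le_depthV hw.le
  rwa [show T.depthV w - T.depthV b = T.depthV w - (T.depthV b + 1) + 1 by omega,
    Function.iterate_succ_apply'] at hwb

theorem exists_mem_children_of_isLeaf (h2 : 2 ≤ T.childCount b) {w : V} (hw : T.IsLeaf w) :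
    ∃ u ∈ T.children b, w ∈ T.desc u := by
  refine hb.exists_mem_children_mem_desc (lt_of_not_ge fun hle => ?_)
  have hwb := hb.iterate_eq_of_depthV_le hle
  obtain ⟨c, hc⟩ : (T.children w).Nonempty := by
    by_cases h : w = b
    · rw [← Finset.card_pos, ← childCount_eq_card_children, h]
      omega
    · obtain ⟨c, hc, -⟩ := IsStrictAncestor.exists_mem_children ⟨h, _, hwb⟩
      exact ⟨c, hc⟩
  exact (mem_children.1 hc).2 (hw c (mem_children.1 hc).1)

end HasUnaryAncestors

theorem exists_hasUnaryAncestors_of_not_isRootedPath (hT : ¬ T.IsRootedPath) :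
    ∃ b : V, 2 ≤ T.childCount b ∧ T.HasUnaryAncestors b := by
  classical
  obtain ⟨u, hu⟩ := not_forall.1 hT
  obtain ⟨b, hb2, hmin⟩ := Finset.exists_min_image {u | 2 ≤ T.childCount u} T.depthV
    ⟨u, by simp only [Finset.mem_filter, Finset.mem_univ, true_and]; omega⟩
  simp only [Finset.mem_filter, Finset.mem_univ, true_and] at hb2 hmin
  refine ⟨b, hb2, fun a ha => ?_⟩
  obtain ⟨c, hc, -⟩ := ha.exists_mem_children
  have h1 : 0 < T.childCount a := by
    rw [childCount_eq_card_children]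
    exact Finset.card_pos.2 ⟨c, hc⟩
  have h2 : ¬ 2 ≤ T.childCount a := fun h => absurd (hmin a h) (not_le.2 ha.depthV_lt)
  omega

theorem isPrimaryBranch_iff_mem_children {b : V} (h2 : 2 ≤ T.childCount b)
    (hb : T.HasUnaryAncestors b) {u : V} : T.IsPrimaryBranch u ↔ u ∈ T.children b := by
  refine ⟨fun ⟨hu, h2', hb'⟩ => ?_, fun hu => ⟨ne_root_of_mem_children hu, ?_, ?_⟩⟩
  · obtain rfl := hb.eq_of_two_le_childCount hb' h2 h2'
    exact mem_children.2 ⟨rfl, fun h => hu (parent_eq_self_iff.1 h.symm)⟩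
  · rwa [(mem_children.1 hu).1]
  · rw [(mem_children.1 hu).1]
    exact hb

theorem HasUnaryAncestors.pathEdges_subset {b u w : V} (hb : T.HasUnaryAncestors b)
    (hu : u ∈ T.children b) (hw : w ∈ T.desc u) :
    T.pathEdges w ⊆ T.pathEdges b ∪ T.desc u := by
  rintro z ⟨hz, n, rfl⟩
  rcases le_or_gt (T.depthV (T.parent^[n] w)) (T.depthV b) with hle | hlt
  · exact Or.inl ⟨hz, _, hb.iterate_eq_of_depthV_le hle⟩
  · obtain ⟨u', hu', hzu'⟩ := hb.exists_mem_children_mem_desc hlt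
    obtain rfl : u' = u := by
      by_contra hne
      exact Set.disjoint_left.1 (pairwiseDisjoint_desc_children b hu' hu hne)
        (mem_desc_trans hzu' ⟨n, rfl⟩) hw
    exact Or.inr hzu'

theorem ncard_pathEdges_union_biUnion_desc {b : V} {t : Finset V} (ht : t ⊆ T.children b) :
    (T.pathEdges b ∪ ⋃ u ∈ t, T.desc u).ncard =
      T.depthV b + ∑ u ∈ t, (T.desc u).ncard := by
  have hdisj : Disjoint (T.pathEdges b) (⋃ u ∈ t, T.desc u) :=
    Set.disjoint_iUnion₂_right.2 fun u hu =>
      disjoint_pathEdges_desc (by rw [depthV_of_mem_children (ht hu)]; omega)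
  rw [Set.ncard_union_eq hdisj, ncard_pathEdges, ← Finset.set_biUnion_coe,
    Set.Finite.ncard_biUnion t.finite_toSet (fun _ _ => Set.toFinite _)
      ((pairwiseDisjoint_desc_children b).subset ht), finsum_mem_coe_finset]

variable (T) in
theorem depthV_add_sum_ncard_desc_le_edgeCount (b : V) :
    T.depthV b + ∑ u ∈ T.children b, (T.desc u).ncard ≤ T.edgeCount := by
  have hsub : T.pathEdges b ∪ ⋃ u ∈ T.children b, T.desc u ⊆ {T.root}ᶜ := by
    rintro w (⟨hw, -⟩ | hw)
    · exact hw
    · obtain ⟨u, hu, hwu⟩ := Set.mem_iUnion₂.1 hw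
      have := le_depthV_of_mem_desc hwu
      rw [depthV_of_mem_children hu] at this
      exact fun h => by rw [Set.mem_singleton_iff.1 h, depthV_eq_zero_iff.2 rfl] at this; omega
  rw [← ncard_pathEdges_union_biUnion_desc subset_rfl, edgeCount]
  calc _ ≤ ({T.root}ᶜ : Set V).ncard := Set.ncard_le_ncard hsub
    _ = Fintype.card V - 1 := by
      rw [Set.ncard_compl, Set.ncard_singleton, Nat.card_eq_fintype_card]

end RTree

namespace IsDepthDecompOn

variable {X V : Type} [Fintype V] [DecidableEq V] {rk : Set X → ℕ} {r : ℕ} {T : RTree V}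
  {f : X → V} {b : V}

theorem rk_le_depthV_add_sum (hdd : IsDepthDecompOn rk r T f) (hb : T.HasUnaryAncestors b)
    {t : Finset V} (ht : t ⊆ T.children b) :
    rk {x | f x ∈ ⋃ u ∈ t, T.desc u} ≤ T.depthV b + ∑ u ∈ t, (T.desc u).ncard := by
  refine (hdd.2.2 _).trans ?_
  rw [← RTree.ncard_pathEdges_union_biUnion_desc ht]
  refine Set.ncard_le_ncard (Set.iUnion₂_subset fun x hx => ?_)
  obtain ⟨u, hu, hxu⟩ := Set.mem_iUnion₂.1 hx
  exact (hb.pathEdges_subset (ht hu) hxu).trans <| Set.union_subset_union_right _ <|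
    Set.subset_iUnion₂ (s := fun u (_ : u ∈ t) => T.desc u) u hu

theorem biUnion_desc_children_eq_univ (hdd : IsDepthDecompOn rk r T f)
    (h2 : 2 ≤ T.childCount b) (hb : T.HasUnaryAncestors b) :
    {x | f x ∈ ⋃ u ∈ T.children b, T.desc u} = Set.univ :=
  Set.eq_univ_of_forall fun x => by
    obtain ⟨u, hu, hxu⟩ := hb.exists_mem_children_of_isLeaf h2 (hdd.1 x)
    exact Set.mem_iUnion₂.2 ⟨u, hu, hxu⟩

end IsDepthDecompOn

/-- Lemma: the hulls of primary branches at capacity pairwise intersect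
in a common subspace. Let `(T, f)` be a depth-decomposition of a vector matroid such
that `T` is not a rooted path and each primary branch of `T` is at capacity, and let `h`
be the depth of the common root of the primary branches.  Then there exists a subspace
`K` of dimension `h` such that the linear hulls of `Ŝᵢ` and `Ŝⱼ` intersect exactly in
`K` for every two distinct primary branches. -/
theorem exists_common_intersection_subspace (F W ι : Type) [Field F] [AddCommGroup W]
    [Module F W] [Fintype ι] (v : ι → W) {V : Type} [Fintype V] [DecidableEq V]
    (T : RTree V) (f : ι → V)
    (hdd : IsDepthDecompOn (vecRk F v) (vecRk F v Set.univ) T f)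
    (hnp : ¬ T.IsRootedPath)
    (hcap : ∀ u' : V, T.IsPrimaryBranch u' → AtCapacity (vecRk F v) T f u')
    (h : ℕ) (hh : ∀ u' : V, T.IsPrimaryBranch u' → T.depthV (T.parent u') = h) :
    ∃ K : Submodule F W, Module.finrank F K = h ∧
      ∀ u₁ u₂ : V, T.IsPrimaryBranch u₁ → T.IsPrimaryBranch u₂ → u₁ ≠ u₂ →
        Submodule.span F (v '' {x | f x ∈ T.desc u₁}) ⊓
          Submodule.span F (v '' {x | f x ∈ T.desc u₂}) = K := by
  obtain ⟨b, h2, hb⟩ := RTree.exists_hasUnaryAncestors_of_not_isRootedPath hnp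
  have hprim {u : V} := RTree.isPrimaryBranch_iff_mem_children h2 hb (u := u)
  have hC := RTree.nontrivial_children h2
  obtain ⟨u₀, hu₀⟩ := hC.nonempty
  have hbh : T.depthV b = h := by rw [← hh u₀ (hprim.2 hu₀), (RTree.mem_children.1 hu₀).1]
  set A : V → Submodule F W := fun u => Submodule.span F (v '' {x | f x ∈ T.desc u}) with hA
  have : ∀ u, FiniteDimensional F (A u) := fun u =>
    FiniteDimensional.span_of_finite F ((Set.toFinite _).image v)
  have hsup (t : Finset V) :
      t.sup A = Submodule.span F (v '' {x | f x ∈ ⋃ u ∈ t, T.desc u}) := by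
    rw [hA, Submodule.finset_sup_span_image]
    congr 2
    exact (Set.preimage_iUnion₂ ..).symm
  have hdim : ∀ u ∈ T.children b, finrank F (A u) = h + (T.desc u).ncard := fun u hu => by
    rw [add_comm, ← hh u (hprim.2 hu)]
    exact hcap u (hprim.2 hu)
  have hle : ∀ t ⊆ T.children b,
      finrank F ↥(t.sup A) ≤ h + ∑ u ∈ t, (T.desc u).ncard := fun t ht => by
    rw [hsup, ← hbh]
    exact hdd.rk_le_depthV_add_sum hb ht
  have htotal : h + ∑ u ∈ T.children b, (T.desc u).ncard ≤
      finrank F ↥((T.children b).sup A) := by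
    rw [hsup, hdd.biUnion_desc_children_eq_univ h2 hb, ← hbh]
    exact (T.depthV_add_sum_ncard_desc_le_edgeCount b).trans hdd.2.1.le
  obtain ⟨K, hK, hKA⟩ := Submodule.exists_pairwise_inf_eq_of_finrank hdim hle htotal hC
  exact ⟨K, hK, fun u₁ u₂ h₁ h₂ hne => hKA _ (hprim.1 h₁) _ (hprim.1 h₂) hne⟩
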